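/- For n ≥ 1, if e₀ is a complex number satisfying 3n²e₀^{2n} + n(n+5)e₀^n + 2 = 0 (i.e., an extraneous fixed point of C_n), then the multiplier satisfies C_n'(e₀) = 1 + (1/2)·n²e₀^n·(n(n-1)e₀^n - (n+1))/(ne₀^n + 1)⁴, and since ne₀^n < 0 (e₀^n is real and negative), this multiplier is a real number strictly greater than 1. Hence all extraneous fixed points of C_n are repelling. -/

import Mathlib

/-!
With `u = z ^ n` one has `Cn n z = z * R u` for a rational function `R`, so
`(Cn n)' z = R u + n u R' u` is a rational function of `u`; modulo the extraneous-point equation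
`3n²u² + n(n+5)u + 2 = 0` it reduces to the stated multiplier. This quadratic has positive real
coefficients and discriminant `n²(n² + 10n + 1) ≥ 0`, so `u` is a negative real; then `n²u` and
`n(n-1)u - (n+1)` are both negative and the multiplier is a real number `> 1`.
-/

/-- The rational map given by the Chebyshev's method applied to `z·e^{z^n}`. -/
noncomputable def Cn (n : ℕ) (z : ℂ) : ℂ :=
  (n:ℂ) * z^(n+1) * (2*(n:ℂ)^2*z^(2*n) + 3*(n:ℂ)*z^n - (n:ℂ) + 1) /
    (2 * ((n:ℂ)*z^n + 1)^3)

theorem Complex.exists_neg_real_eq_of_quadratic_eq_zero {a b c : ℝ} (ha : 0 < a) (hb : 0 < b)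
    (hc : 0 < c) (hd : 0 ≤ discrim a b c) {x : ℂ} (hx : a * (x * x) + b * x + c = 0) :
    ∃ w : ℝ, w < 0 ∧ x = w := by
  set s := √(discrim a b c)
  have hs : discrim (a:ℂ) b c = s * s := by
    rw [← Complex.ofReal_mul, Real.mul_self_sqrt hd]
    simp [discrim]
  have hsb : s < b := by
    rw [Real.sqrt_lt' hb]
    unfold discrim
    nlinarith
  have hs0 : 0 ≤ s := Real.sqrt_nonneg _
  rw [quadratic_eq_zero_iff (by exact_mod_cast ha.ne') hs] at hx
  rcases hx with rfl | rfl
  · exact ⟨(-b + s) / (2 * a), div_neg_of_neg_of_pos (by linarith) (by positivity),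
      by push_cast; rfl⟩
  · exact ⟨(-b - s) / (2 * a), div_neg_of_neg_of_pos (by linarith) (by positivity),
      by push_cast; rfl⟩

theorem hasDerivAt_Cn (n : ℕ) {z : ℂ} (hz : (n:ℂ) * z^n + 1 ≠ 0) :
    HasDerivAt (Cn n) ((n:ℂ) * z^n * (2*(n:ℂ)^3*(z^n)^3 + (3*(n:ℂ)^3 + 5*(n:ℂ)^2)*(z^n)^2
      + (2*(n:ℂ)^3 + 3*(n:ℂ)^2 + 4*(n:ℂ))*z^n + 1 - (n:ℂ)^2) / (2*((n:ℂ)*z^n + 1)^4)) z := by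
  set u := z^n with hu
  have hlin : HasDerivAt (fun v : ℂ => (n:ℂ) * v + 1) n u := by
    simpa using ((hasDerivAt_id' u).const_mul (n:ℂ)).add_const 1
  have hnum := ((hasDerivAt_id' u).const_mul (n:ℂ)).fun_mul
    (((((hasDerivAt_pow 2 u).const_mul (2*(n:ℂ)^2)).fun_add
      ((hasDerivAt_id' u).const_mul (3*(n:ℂ)))).sub_const (n:ℂ)).add_const 1)
  have hR := hnum.fun_div ((hlin.fun_pow 3).const_mul 2) (by simpa using pow_ne_zero 3 hz)
  have hpow : HasDerivAt (fun x : ℂ => x^n) _ z := hasDerivAt_pow n z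
  have hC := (hasDerivAt_id' z).fun_mul (hR.comp (h := fun x : ℂ => x^n) z hpow)
  have hpred : z * (n * z^(n-1)) = n * u := by
    cases n with
    | zero => simp
    | succ k => rw [hu, Nat.add_sub_cancel, pow_succ]; ring
  refine (hC.congr_of_eventuallyEq (.of_forall fun w => ?_)).congr_deriv ?_
  · simp only [Cn, Function.comp_apply]
    rw [pow_succ w n, pow_mul' w 2 n]
    ring
  · rw [mul_comm _ ((n:ℂ) * _), ← mul_assoc, hpred]
    simp only [Function.comp_apply, ← hu]
    clear_value u
    field_simp
    ring

theorem ne_zero_of_extraneous {n : ℕ} {u : ℂ} (hu : 3*(n:ℂ)^2*u^2 + n*(n+5)*u + 2 = 0) :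
    n ≠ 0 := by
  rintro rfl
  norm_num at hu

theorem natCast_mul_add_one_ne_zero_of_extraneous {n : ℕ} {u : ℂ}
    (hu : 3*(n:ℂ)^2*u^2 + n*(n+5)*u + 2 = 0) : (n:ℂ) * u + 1 ≠ 0 := by
  intro h
  have : (n:ℂ) = 0 := by linear_combination (3*(n:ℂ)*u + n + 2) * h - hu
  exact ne_zero_of_extraneous hu (by exact_mod_cast this)

theorem deriv_Cn_of_extraneous {n : ℕ} {z : ℂ}
    (hz : 3*(n:ℂ)^2*(z^n)^2 + n*(n+5)*z^n + 2 = 0) :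
    deriv (Cn n) z =
      1 + (1/2) * ((n:ℂ)^2 * z^n * ((n:ℂ)*((n:ℂ)-1)*z^n - ((n:ℂ)+1))) / ((n:ℂ)*z^n + 1)^4 := by
  have hD := natCast_mul_add_one_ne_zero_of_extraneous hz
  rw [(hasDerivAt_Cn n hD).deriv]
  field_simp
  linear_combination (((n:ℂ)^2 - n) * z^n - 1) * hz

theorem one_lt_multiplier {n w : ℝ} (hn : 1 ≤ n) (hw : w < 0) (hD : n * w + 1 ≠ 0) :
    1 < 1 + (1/2) * (n^2 * w * (n*(n-1)*w - (n+1))) / (n*w + 1)^4 := by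
  have hnw : n*(n-1)*w ≤ 0 := mul_nonpos_of_nonneg_of_nonpos (by nlinarith) hw.le
  have hnum : 0 < n^2 * w * (n*(n-1)*w - (n+1)) :=
    mul_pos_of_neg_of_neg (mul_neg_of_pos_of_neg (by positivity) hw) (by linarith)
  exact lt_add_of_pos_right _ (div_pos (by positivity) (Even.pow_pos (by decide) hD))

theorem Cn_extraneous_repelling_general (n : ℕ) (e₀ : ℂ)
    (he : 3*(n:ℂ)^2*e₀^(2*n) + (n:ℂ)*((n:ℂ)+5)*e₀^n + 2 = 0) :
    deriv (Cn n) e₀ =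
      1 + (1/2) * ((n:ℂ)^2 * e₀^n * ((n:ℂ)*((n:ℂ)-1)*e₀^n - ((n:ℂ)+1))) /
        ((n:ℂ)*e₀^n + 1)^4 ∧
    (∃ w : ℝ, w < 0 ∧ e₀^n = (w:ℂ)) ∧
    (∃ m : ℝ, 1 < m ∧ deriv (Cn n) e₀ = (m:ℂ)) ∧
    1 < ‖deriv (Cn n) e₀‖ := by
  rw [pow_mul'] at he
  have hn : 1 ≤ (n:ℝ) := Nat.one_le_cast.2 (Nat.one_le_iff_ne_zero.2 (ne_zero_of_extraneous he))
  have hderiv := deriv_Cn_of_extraneous he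
  obtain ⟨w, hw, hwu⟩ : ∃ w : ℝ, w < 0 ∧ e₀^n = w :=
    Complex.exists_neg_real_eq_of_quadratic_eq_zero (a := 3*n^2) (b := n*(n+5)) (c := 2)
      (by positivity) (by positivity) two_pos (by unfold discrim; nlinarith)
      (by push_cast; linear_combination he)
  have hD : (n:ℝ) * w + 1 ≠ 0 := by
    exact_mod_cast hwu ▸ natCast_mul_add_one_ne_zero_of_extraneous he
  have hm : deriv (Cn n) e₀ =
      ((1 + (1/2) * ((n:ℝ)^2 * w * (n*(n-1)*w - (n+1))) / (n*w + 1)^4 : ℝ) : ℂ) := by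
    rw [hderiv, hwu]
    push_cast
    ring
  have hm1 := one_lt_multiplier hn hw hD
  refine ⟨hderiv, ⟨w, hw, hwu⟩, ⟨_, hm1, hm⟩, ?_⟩
  rwa [hm, Complex.norm_real, Real.norm_of_nonneg (by linarith)]

/-- If `e₀` is an extraneous fixed point of `C_n` (i.e. `3n²e₀^{2n} + n(n+5)e₀^n + 2 = 0`),
then the multiplier equals `1 + (1/2)·n²e₀^n·(n(n-1)e₀^n - (n+1))/(ne₀^n + 1)⁴`,
`e₀^n` is real and negative, and the multiplier is a real number strictly greater
than `1`; in particular the fixed point is repelling. -/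
theorem Cn_extraneous_repelling (n : ℕ) (hn : 1 ≤ n) (e₀ : ℂ)
    (he : 3*(n:ℂ)^2*e₀^(2*n) + (n:ℂ)*((n:ℂ)+5)*e₀^n + 2 = 0) :
    deriv (Cn n) e₀ =
      1 + (1/2) * ((n:ℂ)^2 * e₀^n * ((n:ℂ)*((n:ℂ)-1)*e₀^n - ((n:ℂ)+1))) /
        ((n:ℂ)*e₀^n + 1)^4 ∧
    (∃ w : ℝ, w < 0 ∧ e₀^n = (w:ℂ)) ∧
    (∃ m : ℝ, 1 < m ∧ deriv (Cn n) e₀ = (m:ℂ)) ∧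
    1 < ‖deriv (Cn n) e₀‖ :=
  Cn_extraneous_repelling_general n e₀ he
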